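/- Fix β > 0 and for n ≥ 1 set x_n = −e·n − β·n^{1/3} and z_n = n/x_n. Then for every n ≥ 1 one has −e^{−1} < z_n < 0, and with LW₀(z_n) denoting the unique w ∈ (−1, 0) satisfying w·exp(w) = z_n, the limit n^{1/3}·(LW₀(z_n) + 1) → √(2β/e) holds as n → ∞. -/

import Mathlib

/-!
Put `t = LW₀(z) + 1`. The equation `w·exp w = z` becomes `1 + (t - 1)·exp t = 1 + e·z`, and
for `t ≥ 0` the left side lies between `t²/2` and `t²/2 · exp t`; hence `t² ∼ 2(1 + e·z)` as
`z → −e⁻¹`. Writing `c = n^{1/3}`, one has `1 + e·zₙ = β / (e·c² + β)`, so `c²·t² → 2β/e`.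
-/

/-- The principal real branch of the Lambert W function on `(−e⁻¹, 0)`:
the unique `w ∈ (−1, 0)` with `w·exp w = z`. -/
noncomputable def LW0neg (z : ℝ) : ℝ :=
  Function.invFunOn (fun w => w * Real.exp w) (Set.Ioo (-1) 0) z

open Real Filter Set Topology

lemma exists_mul_exp_eq_of_mem_Ioo {z : ℝ} (hz : z ∈ Ioo (-exp (-1)) 0) :
    ∃ w ∈ Ioo (-1 : ℝ) 0, w * exp w = z := by
  have hcont : ContinuousOn (fun w : ℝ => w * exp w) (Icc (-1) 0) := by fun_prop
  simpa using intermediate_value_Ioo (by norm_num : (-1 : ℝ) ≤ 0) hcont (by simpa using hz)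

lemma LW0neg_mem_Ioo {z : ℝ} (hz : z ∈ Ioo (-exp (-1)) 0) : LW0neg z ∈ Ioo (-1) 0 :=
  Function.invFunOn_mem (exists_mul_exp_eq_of_mem_Ioo hz)

lemma LW0neg_mul_exp_self {z : ℝ} (hz : z ∈ Ioo (-exp (-1)) 0) :
    LW0neg z * exp (LW0neg z) = z :=
  Function.invFunOn_eq (f := fun w => w * exp w) (exists_mul_exp_eq_of_mem_Ioo hz)

lemma le_of_hasDerivAt_le_of_le {f g f' g' : ℝ → ℝ} {a t : ℝ}
    (hf : ∀ x, HasDerivAt f (f' x) x) (hg : ∀ x, HasDerivAt g (g' x) x)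
    (ha : f a ≤ g a) (hle : ∀ x, a ≤ x → f' x ≤ g' x) (ht : a ≤ t) : f t ≤ g t :=
  image_le_of_deriv_right_le_deriv_boundary
    (fun x _ => (hf x).continuousAt.continuousWithinAt) (fun x _ => (hf x).hasDerivWithinAt) ha
    (fun x _ => (hg x).continuousAt.continuousWithinAt) (fun x _ => (hg x).hasDerivWithinAt)
    (fun x hx => hle x hx.1) ⟨ht, le_rfl⟩

lemma hasDerivAt_one_add_sub_one_mul_exp (x : ℝ) :
    HasDerivAt (fun t => 1 + (t - 1) * exp t) (x * exp x) x :=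
  ((((hasDerivAt_id x).sub_const 1).mul (hasDerivAt_exp x)).const_add 1).congr_deriv
    (by rw [id]; ring)

lemma sq_div_two_le_one_add_sub_one_mul_exp {t : ℝ} (ht : 0 ≤ t) :
    t ^ 2 / 2 ≤ 1 + (t - 1) * exp t := by
  refine le_of_hasDerivAt_le_of_le (f := fun t => t ^ 2 / 2) (fun x => ?_)
    hasDerivAt_one_add_sub_one_mul_exp
    (by simp) (fun x hx => le_mul_of_one_le_right hx (one_le_exp hx)) ht
  simpa using (hasDerivAt_pow 2 x).div_const 2

lemma one_add_sub_one_mul_exp_le {t : ℝ} (ht : 0 ≤ t) :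
    1 + (t - 1) * exp t ≤ t ^ 2 / 2 * exp t := by
  refine le_of_hasDerivAt_le_of_le (g := fun t => t ^ 2 / 2 * exp t)
    (g' := fun x => x * exp x + x ^ 2 / 2 * exp x) hasDerivAt_one_add_sub_one_mul_exp
    (fun x => ?_) (by simp) (fun x _ => ?_) ht
  · exact (((hasDerivAt_pow 2 x).div_const 2).mul (hasDerivAt_exp x)).congr_deriv (by simp)
  · exact le_add_of_nonneg_right (by positivity)

lemma one_add_LW0neg_mul_exp_LW0neg_add_one {z : ℝ} (hz : z ∈ Ioo (-exp (-1)) 0) :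
    1 + (LW0neg z + 1 - 1) * exp (LW0neg z + 1) = 1 + exp 1 * z := by
  rw [add_sub_cancel_right, exp_add]
  linear_combination exp 1 * LW0neg_mul_exp_self hz

lemma sq_LW0neg_add_one_le {z : ℝ} (hz : z ∈ Ioo (-exp (-1)) 0) :
    (LW0neg z + 1) ^ 2 ≤ 2 * (1 + exp 1 * z) := by
  have := sq_div_two_le_one_add_sub_one_mul_exp (t := LW0neg z + 1)
    (by linarith [(LW0neg_mem_Ioo hz).1])
  rw [one_add_LW0neg_mul_exp_LW0neg_add_one hz] at this
  linarith

lemma mul_exp_neg_le_sq_LW0neg_add_one {z : ℝ} (hz : z ∈ Ioo (-exp (-1)) 0) :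
    2 * (1 + exp 1 * z) * exp (-(LW0neg z + 1)) ≤ (LW0neg z + 1) ^ 2 := by
  have := one_add_sub_one_mul_exp_le (t := LW0neg z + 1) (by linarith [(LW0neg_mem_Ioo hz).1])
  rw [one_add_LW0neg_mul_exp_LW0neg_add_one hz] at this
  calc 2 * (1 + exp 1 * z) * exp (-(LW0neg z + 1))
      ≤ 2 * ((LW0neg z + 1) ^ 2 / 2 * exp (LW0neg z + 1)) * exp (-(LW0neg z + 1)) := by gcongr
    _ = (LW0neg z + 1) ^ 2 := by rw [exp_neg]; field_simp

theorem tendsto_mul_LW0neg_add_one {α : Type*} {l : Filter α} {z c : α → ℝ} {L : ℝ}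
    (hz : ∀ᶠ x in l, z x ∈ Ioo (-exp (-1)) 0) (hc : ∀ᶠ x in l, 0 ≤ c x)
    (hδ : Tendsto (fun x => 1 + exp 1 * z x) l (𝓝 0))
    (hcδ : Tendsto (fun x => c x ^ 2 * (1 + exp 1 * z x)) l (𝓝 L)) :
    Tendsto (fun x => c x * (LW0neg (z x) + 1)) l (𝓝 √(2 * L)) := by
  set t := fun x => LW0neg (z x) + 1
  have ht_nonneg : ∀ᶠ x in l, 0 ≤ t x :=
    hz.mono fun x hx => by linarith [(LW0neg_mem_Ioo hx).1]
  have ht : Tendsto t l (𝓝 0) := by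
    refine squeeze_zero' ht_nonneg ?_
      (by simpa using (hδ.const_mul 2).sqrt :
        Tendsto (fun x => √(2 * (1 + exp 1 * z x))) l (𝓝 0))
    filter_upwards [hz, ht_nonneg] with x hx htx
    have hle := sq_LW0neg_add_one_le hx
    exact (le_sqrt htx ((sq_nonneg _).trans hle)).2 hle
  have hsq : Tendsto (fun x => (c x * t x) ^ 2) l (𝓝 (2 * L)) := by
    have hlow : Tendsto (fun x => 2 * (c x ^ 2 * (1 + exp 1 * z x)) * exp (-t x)) l
        (𝓝 (2 * L)) := by
      simpa using (hcδ.const_mul 2).mul (((continuous_exp.comp continuous_neg).tendsto 0).comp ht)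
    refine tendsto_of_tendsto_of_tendsto_of_le_of_le' hlow (hcδ.const_mul 2) ?_ ?_
    · filter_upwards [hz] with x hx
      calc 2 * (c x ^ 2 * (1 + exp 1 * z x)) * exp (-t x)
          = c x ^ 2 * (2 * (1 + exp 1 * z x) * exp (-t x)) := by ring
        _ ≤ c x ^ 2 * t x ^ 2 :=
          mul_le_mul_of_nonneg_left (mul_exp_neg_le_sq_LW0neg_add_one hx) (sq_nonneg _)
        _ = (c x * t x) ^ 2 := by ring
    · filter_upwards [hz] with x hx
      calc (c x * t x) ^ 2 = c x ^ 2 * t x ^ 2 := by ring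
        _ ≤ c x ^ 2 * (2 * (1 + exp 1 * z x)) :=
          mul_le_mul_of_nonneg_left (sq_LW0neg_add_one_le hx) (sq_nonneg _)
        _ = 2 * (c x ^ 2 * (1 + exp 1 * z x)) := by ring
  refine hsq.sqrt.congr' ?_
  filter_upwards [hc, ht_nonneg] with x hcx htx
  exact sqrt_sq (mul_nonneg hcx htx)

lemma mem_Ioo_neg_exp_neg_one_iff {z : ℝ} :
    z ∈ Ioo (-exp (-1)) 0 ↔ 1 + exp 1 * z ∈ Ioo 0 1 := by
  have he := exp_pos 1
  have hinv : exp 1 * (exp 1)⁻¹ = 1 := mul_inv_cancel₀ he.ne'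
  simp only [mem_Ioo, exp_neg]
  constructor <;> rintro ⟨h₁, h₂⟩ <;> constructor <;> nlinarith

section Transition

/-! Here `c` stands for `n^{1/3}`, so that `c ^ 3 / (-(exp 1 * c ^ 3) - β * c)` is `zₙ`. -/

variable {β : ℝ}

lemma one_add_exp_one_mul_transition (hβ : 0 < β) {c : ℝ} (hc : c ≠ 0) :
    1 + exp 1 * (c ^ 3 / (-(exp 1 * c ^ 3) - β * c)) = β / (exp 1 * c ^ 2 + β) := by
  have : exp 1 * c ^ 2 + β ≠ 0 := by positivity
  rw [show -(exp 1 * c ^ 3) - β * c = -(c * (exp 1 * c ^ 2 + β)) by ring]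
  field_simp
  ring

lemma transition_mem_Ioo (hβ : 0 < β) {c : ℝ} (hc : c ≠ 0) :
    c ^ 3 / (-(exp 1 * c ^ 3) - β * c) ∈ Ioo (-exp (-1)) 0 := by
  rw [mem_Ioo_neg_exp_neg_one_iff, one_add_exp_one_mul_transition hβ hc]
  have : 0 < exp 1 * c ^ 2 := by positivity
  exact ⟨by positivity, (div_lt_one (by positivity)).2 (by linarith)⟩

theorem tendsto_mul_LW0neg_transition_add_one (hβ : 0 < β) :
    Tendsto (fun c : ℝ => c * (LW0neg (c ^ 3 / (-(exp 1 * c ^ 3) - β * c)) + 1)) atTop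
      (𝓝 √(2 * β / exp 1)) := by
  have hpos : ∀ᶠ c : ℝ in atTop, 0 < c := eventually_gt_atTop 0
  have hsq : Tendsto (fun c : ℝ => c ^ 2) atTop atTop := tendsto_pow_atTop two_ne_zero
  rw [mul_div_assoc]
  refine tendsto_mul_LW0neg_add_one (hpos.mono fun c hc => transition_mem_Ioo hβ hc.ne')
    (hpos.mono fun c hc => hc.le) ?_ ?_
  · have hden : Tendsto (fun c : ℝ => exp 1 * c ^ 2 + β) atTop atTop :=
      (hsq.const_mul_atTop (exp_pos 1)).atTop_add tendsto_const_nhds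
    refine ((tendsto_const_nhds (x := β)).div_atTop hden).congr' ?_
    filter_upwards [hpos] with c hc
    rw [one_add_exp_one_mul_transition hβ hc.ne']
  · have hden : Tendsto (fun c : ℝ => exp 1 + β * (c ^ 2)⁻¹) atTop (𝓝 (exp 1)) := by
      simpa using tendsto_const_nhds.add ((tendsto_inv_atTop_zero.comp hsq).const_mul β)
    refine ((tendsto_const_nhds (x := β)).div hden (exp_pos 1).ne').congr' ?_
    filter_upwards [hpos] with c hc
    rw [one_add_exp_one_mul_transition hβ hc.ne', Pi.div_apply]
    field_simp

end Transition

/-- For fixed `β > 0`, with `xₙ = −e·n − β·n^{1/3}` and `zₙ = n/xₙ`, one has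
`−e⁻¹ < zₙ < 0` for all `n ≥ 1`, and `n^{1/3}·(LW₀(zₙ) + 1) → √(2β/e)` as `n → ∞`. -/
theorem lambertW_transition_region (β : ℝ) (hβ : 0 < β) :
    (∀ n : ℕ, 1 ≤ n →
      -Real.exp (-1) <
        (n : ℝ) / (-(Real.exp 1 * n) - β * (n : ℝ) ^ ((1 : ℝ) / 3)) ∧
      (n : ℝ) / (-(Real.exp 1 * n) - β * (n : ℝ) ^ ((1 : ℝ) / 3)) < 0) ∧
    Filter.Tendsto (fun n : ℕ =>
        (n : ℝ) ^ ((1 : ℝ) / 3) *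
          (LW0neg ((n : ℝ) / (-(Real.exp 1 * n) - β * (n : ℝ) ^ ((1 : ℝ) / 3))) + 1))
      Filter.atTop (nhds (Real.sqrt (2 * β / Real.exp 1))) := by
  have hcube (n : ℕ) : ((n : ℝ) ^ ((1 : ℝ) / 3)) ^ 3 = n := by
    rw [one_div, show (3 : ℝ) = (3 : ℕ) by norm_num,
      rpow_inv_natCast_pow n.cast_nonneg three_ne_zero]
  refine ⟨fun n hn => ?_, ?_⟩
  · have hc : (n : ℝ) ^ ((1 : ℝ) / 3) ≠ 0 := (rpow_pos_of_pos (by exact_mod_cast hn) _).ne'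
    simpa only [hcube, mem_Ioo] using transition_mem_Ioo hβ hc
  · have hc : Tendsto (fun n : ℕ => (n : ℝ) ^ ((1 : ℝ) / 3)) atTop atTop :=
      (tendsto_rpow_atTop (by norm_num)).comp tendsto_natCast_atTop_atTop
    simpa only [Function.comp_def, hcube] using (tendsto_mul_LW0neg_transition_add_one hβ).comp hc
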